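/- Let f be nilpotent on V over any field, U = (u_1,…,u_k) a generator tuple with exponents t_1 ≤ ⋯ ≤ t_k, and r = (r_1,…,r_k) an admissible tuple (0 ≤ r_i ≤ t_i). Then the marked subspace W(r, U) = ⟨f^{r_1}u_1⟩ ⊕ ⋯ ⊕ ⟨f^{r_k}u_k⟩ is hyperinvariant if and only if r_1 ≤ ⋯ ≤ r_k and t_1 − r_1 ≤ ⋯ ≤ t_k − r_k. -/

import Mathlib

/-!
The vectors `f^m u_l` with `m < t_l` form a basis of `V`, and `W(r, U)` is spanned by those with
`m ≥ r_l`. An endomorphism commuting with `f` is determined by the images `y_l` of the generators,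
and every family with `f^{t_l} y_l = 0` occurs. Since `ker f^s = ⊕_l ⟨f^{t_l - s} u_l⟩`, the image
of `f^{r_i} u_i` under such a map always lies in `⊕_l ⟨f^{r_i + (t_l - t_i)} u_l⟩`, and the map
`u_i ↦ f^{t_j - t_i} u_j` shows that this bound is attained. Hence `W` is hyperinvariant iff
`r_j ≤ r_i + (t_j - t_i)` for all `i, j` (truncated subtraction), which for monotone `t` says
exactly that `r` and `t - r` are monotone.
-/

open LinearMap

variable {K : Type*} [Field K] {V : Type*} [AddCommGroup V] [Module K V]

/-- `X` is hyperinvariant for `f`: invariant under every endomorphism commuting with `f`. -/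
def Hinv (f : V →ₗ[K] V) (X : Submodule K V) : Prop :=
  ∀ g : V →ₗ[K] V, g ∘ₗ f = f ∘ₗ g → X.map g ≤ X

/-- `X` is characteristic for `f`: `f`-invariant and fixed by every automorphism commuting with `f`. -/
def Chinv (f : V →ₗ[K] V) (X : Submodule K V) : Prop :=
  X.map f ≤ X ∧
    ∀ α : V ≃ₗ[K] V, (α : V →ₗ[K] V) ∘ₗ f = f ∘ₗ (α : V →ₗ[K] V) →
      X.map (α : V →ₗ[K] V) = X

/-- The cyclic subspace generated by `x`. -/
def cyc (f : V →ₗ[K] V) (x : V) : Submodule K V :=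
  Submodule.span K (Set.range fun i : ℕ => (f ^ i) x)

/-- `x` has exponent `ℓ`. -/
def ExpEq (f : V →ₗ[K] V) (x : V) (ℓ : ℕ) : Prop :=
  (f ^ ℓ) x = 0 ∧ ∀ j < ℓ, (f ^ j) x ≠ 0

/-- `x` has height `q`. -/
def HeightEq (f : V →ₗ[K] V) (x : V) (q : ℕ) : Prop :=
  x ∈ LinearMap.range (f ^ q) ∧ x ∉ LinearMap.range (f ^ (q + 1))

/-- The `r`-th Ulm invariant: number of Jordan blocks of size `r` (for `r ≥ 1`). -/
noncomputable def ulm (f : V →ₗ[K] V) (r : ℕ) : ℕ :=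
  Module.finrank K ↥(LinearMap.ker f ⊓ LinearMap.range (f ^ (r - 1))) -
    Module.finrank K ↥(LinearMap.ker f ⊓ LinearMap.range (f ^ r))

/-- `u` is a generator tuple with exponents `t`. -/
def IsGenTuple {k : ℕ} (f : V →ₗ[K] V) (u : Fin k → V) (t : Fin k → ℕ) : Prop :=
  (∀ i, ExpEq f (u i) (t i)) ∧ DirectSum.IsInternal (fun i => cyc f (u i))

/-- The summand `⟨U_a⟩` of all cyclic subspaces whose generator has exponent `a`. -/
def subU {k : ℕ} (f : V →ₗ[K] V) (u : Fin k → V) (t : Fin k → ℕ) (a : ℕ) : Submodule K V :=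
  ⨆ i ∈ {i : Fin k | t i = a}, cyc f (u i)

open Polynomial

section Cyclic

variable {f : V →ₗ[K] V}

lemma mem_cyc_iff {x v : V} : v ∈ cyc f x ↔ ∃ p : K[X], aeval f p x = v := by
  have hcyc : cyc f x = (Submodule.span K (Set.range (basisMonomials K))).map
      ((LinearMap.applyₗ x).comp (aeval f).toLinearMap) := by
    rw [Submodule.map_span, ← Set.range_comp, coe_basisMonomials, cyc]
    congr 2
    ext i
    simp
  rw [hcyc, Module.Basis.span_eq, Submodule.map_top, LinearMap.mem_range]
  rfl

lemma pow_apply_mem_cyc (x : V) (n : ℕ) : (f ^ n) x ∈ cyc f x :=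
  Submodule.subset_span ⟨n, rfl⟩

lemma self_mem_cyc (x : V) : x ∈ cyc f x := by
  simpa using pow_apply_mem_cyc (f := f) x 0

lemma pow_apply_mem_cyc_of_mem {x v : V} (hv : v ∈ cyc f x) (n : ℕ) : (f ^ n) v ∈ cyc f x := by
  obtain ⟨p, rfl⟩ := mem_cyc_iff.1 hv
  exact mem_cyc_iff.2 ⟨X ^ n * p, by simp⟩

lemma apply_mem_cyc {x v : V} (hv : v ∈ cyc f x) : f v ∈ cyc f x := by
  simpa using pow_apply_mem_cyc_of_mem hv 1

lemma cyc_le_of_mem {x : V} {W : Submodule K V} (hW : ∀ v ∈ W, f v ∈ W) (hx : x ∈ W) :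
    cyc f x ≤ W := by
  rw [cyc, Submodule.span_le]
  rintro _ ⟨n, rfl⟩
  induction n with
  | zero => simpa using hx
  | succ n ih => simpa [pow_succ'] using hW _ ih

lemma cyc_le_ker_pow {x : V} {s : ℕ} (hx : (f ^ s) x = 0) : cyc f x ≤ ker (f ^ s) := by
  refine cyc_le_of_mem (fun v hv => ?_) hx
  rw [mem_ker] at hv ⊢
  rw [← Module.End.mul_apply, ← pow_succ, pow_succ', Module.End.mul_apply, hv, map_zero]

lemma map_cyc {g : V →ₗ[K] V} (hg : Commute g f) (x : V) : (cyc f x).map g = cyc f (g x) := by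
  rw [cyc, cyc, Submodule.map_span, ← Set.range_comp]
  congr 2
  ext n
  exact LinearMap.congr_fun (hg.pow_right n).eq x

lemma map_pow_cyc (n : ℕ) (x : V) : (cyc f x).map (f ^ n) = cyc f ((f ^ n) x) :=
  map_cyc ((Commute.refl f).pow_left n) x

lemma cyc_pow_le_cyc_pow (x : V) {a b : ℕ} (h : b ≤ a) :
    cyc f ((f ^ a) x) ≤ cyc f ((f ^ b) x) := by
  refine cyc_le_of_mem (fun v => apply_mem_cyc) ?_
  rw [← Nat.sub_add_cancel h, pow_add, Module.End.mul_apply]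
  exact pow_apply_mem_cyc _ _

lemma aeval_mul_apply_eq_zero {x : V} {p : K[X]} (hp : aeval f p x = 0) (q : K[X]) :
    aeval f (q * p) x = 0 := by
  rw [aeval_mul, Module.End.mul_apply, hp, map_zero]

lemma X_pow_dvd_of_aeval_apply_eq_zero {x : V} {ℓ : ℕ} (hx : ExpEq f x ℓ) {p : K[X]}
    (hp : aeval f p x = 0) : X ^ ℓ ∣ p := by
  classical
  -- `gcd p (X ^ ℓ)` also kills `x` and is `X ^ i` up to a unit; minimality of `ℓ` forces `i = ℓ`.
  have hgcd : aeval f (EuclideanDomain.gcd p (X ^ ℓ)) x = 0 := by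
    have hXℓ : aeval f (X ^ ℓ : K[X]) x = 0 := by rw [aeval_X_pow, hx.1]
    rw [EuclideanDomain.gcd_eq_gcd_ab, mul_comm p, mul_comm (X ^ ℓ), map_add, LinearMap.add_apply,
      aeval_mul_apply_eq_zero hp, aeval_mul_apply_eq_zero hXℓ, add_zero]
  obtain ⟨i, hiℓ, c, hc⟩ :=
    (dvd_prime_pow prime_X ℓ).1 (EuclideanDomain.gcd_dvd_right p (X ^ ℓ))
  have hi : (f ^ i) x = 0 := by
    rw [← aeval_X_pow (R := K), ← hc, mul_comm, aeval_mul_apply_eq_zero hgcd]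
  obtain rfl : i = ℓ := le_antisymm hiℓ (not_lt.1 fun h => hx.2 i h hi)
  rw [← hc]
  exact Units.mul_right_dvd.2 (EuclideanDomain.gcd_dvd_left p _)

lemma linearIndependent_pow_apply {x : V} {ℓ : ℕ} (hx : ExpEq f x ℓ) :
    LinearIndependent K fun m : Fin ℓ => (f ^ (m : ℕ)) x := by
  rw [Fintype.linearIndependent_iff]
  intro a ha i
  set p : K[X] := ∑ m : Fin ℓ, C (a m) * X ^ (m : ℕ)
  have hp : aeval f p x = 0 := by simpa [p, Module.algebraMap_end_apply] using ha
  have hp0 : p = 0 := eq_zero_of_dvd_of_degree_lt (X_pow_dvd_of_aeval_apply_eq_zero hx hp)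
    (by simpa using degree_sum_fin_lt a)
  simpa [p, finsetSum_coeff, coeff_C_mul_X_pow, Fin.val_inj] using congr_arg (coeff · i) hp0

lemma cyc_eq_span_fin {x : V} {ℓ : ℕ} (hx : (f ^ ℓ) x = 0) :
    cyc f x = Submodule.span K (Set.range fun m : Fin ℓ => (f ^ (m : ℕ)) x) := by
  refine le_antisymm ?_ (Submodule.span_le.2 ?_)
  · rw [cyc, Submodule.span_le]
    rintro _ ⟨n, rfl⟩
    by_cases hn : n < ℓ
    · exact Submodule.subset_span ⟨⟨n, hn⟩, rfl⟩
    · simp only [Module.End.pow_map_zero_of_le (not_lt.1 hn) hx, SetLike.mem_coe,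
        Submodule.zero_mem]
  · rintro _ ⟨m, rfl⟩
    exact pow_apply_mem_cyc x m

noncomputable def cycBasis {x : V} {ℓ : ℕ} (hx : ExpEq f x ℓ) :
    Module.Basis (Fin ℓ) K (cyc f x) :=
  (Module.Basis.span (linearIndependent_pow_apply hx)).map
    (LinearEquiv.ofEq _ _ (cyc_eq_span_fin hx.1).symm)

lemma cycBasis_apply {x : V} {ℓ : ℕ} (hx : ExpEq f x ℓ) (m : Fin ℓ) :
    (cycBasis hx m : V) = (f ^ (m : ℕ)) x := by
  simp [cycBasis, Module.Basis.span_apply]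

lemma mem_cyc_pow_of_pow_apply_eq_zero {x v : V} {ℓ s : ℕ} (hx : ExpEq f x ℓ)
    (hv : v ∈ cyc f x) (hs : (f ^ s) v = 0) : v ∈ cyc f ((f ^ (ℓ - s)) x) := by
  obtain ⟨p, rfl⟩ := mem_cyc_iff.1 hv
  have hdvd : X ^ ℓ ∣ X ^ s * p := X_pow_dvd_of_aeval_apply_eq_zero hx (by
    rwa [aeval_mul, Module.End.mul_apply, aeval_X_pow])
  obtain ⟨q, rfl⟩ : X ^ (ℓ - s) ∣ p := X_pow_dvd_iff.2 fun d hd => by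
    simpa using X_pow_dvd_iff.1 hdvd (d + s) (by omega)
  exact mem_cyc_iff.2 ⟨q, by rw [mul_comm, aeval_mul, Module.End.mul_apply, aeval_X_pow]⟩

end Cyclic

namespace IsGenTuple

variable {k : ℕ} {f : V →ₗ[K] V} {u : Fin k → V} {t : Fin k → ℕ}

noncomputable def basis (hu : IsGenTuple f u t) : Module.Basis ((l : Fin k) × Fin (t l)) K V :=
  hu.2.collectedBasis fun l => cycBasis (hu.1 l)

lemma basis_apply (hu : IsGenTuple f u t) (p : (l : Fin k) × Fin (t l)) :
    hu.basis p = (f ^ (p.2 : ℕ)) (u p.1) := by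
  rw [basis, hu.2.collectedBasis_coe]
  exact cycBasis_apply (hu.1 p.1) p.2

lemma iSup_cyc_pow_eq_span (hu : IsGenTuple f u t) (r : Fin k → ℕ) :
    ⨆ i, cyc f ((f ^ r i) (u i)) = Submodule.span K (hu.basis '' {p | r p.1 ≤ p.2}) := by
  refine le_antisymm (iSup_le fun i => ?_) (Submodule.span_le.2 ?_)
  · have hzero : (f ^ (t i - r i)) ((f ^ r i) (u i)) = 0 := by
      rw [← Module.End.mul_apply, ← pow_add, Module.End.pow_map_zero_of_le (by omega) (hu.1 i).1]
    rw [cyc_eq_span_fin hzero, Submodule.span_le]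
    rintro _ ⟨m, rfl⟩
    refine Submodule.subset_span ⟨⟨i, ⟨m + r i, by omega⟩⟩, by simp, ?_⟩
    rw [basis_apply, pow_add, Module.End.mul_apply]
  · rintro _ ⟨p, hp, rfl⟩
    rw [hu.basis_apply]
    exact Submodule.mem_iSup_of_mem p.1 (cyc_pow_le_cyc_pow _ hp (self_mem_cyc _))

lemma le_of_pow_apply_mem_iSup_cyc_pow (hu : IsGenTuple f u t) {r : Fin k → ℕ} {j : Fin k}
    {n : ℕ} (hn : n < t j) (h : (f ^ n) (u j) ∈ ⨆ i, cyc f ((f ^ r i) (u i))) : r j ≤ n := by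
  rw [hu.iSup_cyc_pow_eq_span, ← hu.basis_apply ⟨j, ⟨n, hn⟩⟩] at h
  exact hu.basis.self_mem_span_image.1 h

lemma ker_pow_le (hu : IsGenTuple f u t) (s : ℕ) :
    ker (f ^ s) ≤ ⨆ l, cyc f ((f ^ (t l - s)) (u l)) := by
  intro x hx
  have hxtop : x ∈ ⨆ l ∈ Finset.univ, cyc f (u l) := by
    simp [hu.2.submodule_iSup_eq_top]
  obtain ⟨w, rfl⟩ := (Submodule.mem_iSup_finset_iff_exists_sum _ x).1 hxtop
  have hw : ∀ l, (f ^ s) (w l) = 0 := fun l =>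
    (iSupIndep_iff_finsetSum_eq_zero_imp_eq_zero _).1 hu.2.submodule_iSupIndep Finset.univ
      (fun l => (f ^ s) (w l)) (fun l _ => pow_apply_mem_cyc_of_mem (w l).2 s)
      (by rwa [← map_sum]) l (Finset.mem_univ l)
  exact Submodule.sum_mem _ fun l _ =>
    Submodule.mem_iSup_of_mem l (mem_cyc_pow_of_pow_apply_eq_zero (hu.1 l) (w l).2 (hw l))

noncomputable def lift (hu : IsGenTuple f u t) (y : Fin k → V) : V →ₗ[K] V :=
  hu.basis.constr K fun p => (f ^ (p.2 : ℕ)) (y p.1)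

lemma lift_pow_apply (hu : IsGenTuple f u t) {y : Fin k → V} (hy : ∀ l, (f ^ t l) (y l) = 0)
    (l : Fin k) (m : ℕ) : hu.lift y ((f ^ m) (u l)) = (f ^ m) (y l) := by
  by_cases hm : m < t l
  · rw [← hu.basis_apply ⟨l, ⟨m, hm⟩⟩, lift, Module.Basis.constr_basis]
  · rw [Module.End.pow_map_zero_of_le (not_lt.1 hm) (hu.1 l).1,
      Module.End.pow_map_zero_of_le (not_lt.1 hm) (hy l), map_zero]

lemma commute_lift (hu : IsGenTuple f u t) {y : Fin k → V} (hy : ∀ l, (f ^ t l) (y l) = 0) :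
    Commute (hu.lift y) f := by
  refine hu.basis.ext fun p => ?_
  rw [Module.End.mul_apply, Module.End.mul_apply, basis_apply, ← Module.End.mul_apply f,
    ← pow_succ', hu.lift_pow_apply hy, hu.lift_pow_apply hy, pow_succ', Module.End.mul_apply]

lemma hinv_iSup_cyc_pow (hu : IsGenTuple f u t) {r : Fin k → ℕ}
    (hrt : ∀ i j, r j ≤ r i + (t j - t i)) : Hinv f (⨆ i, cyc f ((f ^ r i) (u i))) := by
  intro g hg
  have hc : Commute g f := hg
  rw [Submodule.map_iSup]
  refine iSup_le fun i => ?_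
  have hgu : (f ^ t i) (g (u i)) = 0 := by
    rw [← Module.End.mul_apply, ← (hc.pow_right _).eq, Module.End.mul_apply, (hu.1 i).1, map_zero]
  calc (cyc f ((f ^ r i) (u i))).map g = (cyc f (g (u i))).map (f ^ r i) := by
        rw [map_cyc hc, map_pow_cyc, ← Module.End.mul_apply, (hc.pow_right _).eq,
          Module.End.mul_apply]
    _ ≤ (⨆ l, cyc f ((f ^ (t l - t i)) (u l))).map (f ^ r i) :=
        Submodule.map_mono ((cyc_le_ker_pow hgu).trans (hu.ker_pow_le (t i)))
    _ = ⨆ l, cyc f ((f ^ (r i + (t l - t i))) (u l)) := by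
        simp only [Submodule.map_iSup, map_pow_cyc, pow_add, Module.End.mul_apply]
    _ ≤ ⨆ l, cyc f ((f ^ r l) (u l)) := iSup_mono fun l => cyc_pow_le_cyc_pow _ (hrt i l)

lemma le_add_tsub_of_hinv (hu : IsGenTuple f u t) {r : Fin k → ℕ} (hr : ∀ i, r i ≤ t i)
    (hW : Hinv f (⨆ i, cyc f ((f ^ r i) (u i)))) (i j : Fin k) : r j ≤ r i + (t j - t i) := by
  classical
  by_cases htj : t j ≤ r i + (t j - t i)
  · exact (hr j).trans htj
  set y : Fin k → V := Pi.single i ((f ^ (t j - t i)) (u j))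
  have hy : ∀ l, (f ^ t l) (y l) = 0 := by
    intro l
    by_cases hl : l = i
    · subst hl
      simp only [y, Pi.single_eq_same, ← Module.End.mul_apply, ← pow_add]
      exact Module.End.pow_map_zero_of_le (by omega) (hu.1 j).1
    · simp only [y, Pi.single_eq_of_ne hl, map_zero]
  have hmem := hW _ (hu.commute_lift hy)
    (Submodule.mem_map_of_mem (Submodule.mem_iSup_of_mem i (self_mem_cyc _)))
  simp only [hu.lift_pow_apply hy, y, Pi.single_eq_same, ← Module.End.mul_apply, ← pow_add]
    at hmem
  exact hu.le_of_pow_apply_mem_iSup_cyc_pow (not_le.1 htj) hmem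

lemma hinv_iSup_cyc_pow_iff (hu : IsGenTuple f u t) {r : Fin k → ℕ} (hr : ∀ i, r i ≤ t i) :
    Hinv f (⨆ i, cyc f ((f ^ r i) (u i))) ↔ ∀ i j, r j ≤ r i + (t j - t i) :=
  ⟨hu.le_add_tsub_of_hinv hr, hu.hinv_iSup_cyc_pow⟩

end IsGenTuple

lemma forall_le_add_tsub_iff_monotone {ι : Type*} [LinearOrder ι] {t r : ι → ℕ}
    (ht : Monotone t) (hr : ∀ i, r i ≤ t i) :
    (∀ i j, r j ≤ r i + (t j - t i)) ↔ Monotone r ∧ Monotone fun i => t i - r i := by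
  refine ⟨fun h => ⟨fun i j hij => ?_, fun i j hij => ?_⟩, fun ⟨hmr, hmtr⟩ i j => ?_⟩
  · have := h j i; have := ht hij; omega
  · have := h i j; have := ht hij; have := hr i; have := hr j; dsimp only; omega
  · rcases le_total i j with hij | hij
    · have := hmtr hij; have := ht hij; have := hr i; have := hr j; dsimp only at *; omega
    · have := hmr hij; omega

theorem stmt19_general (f : V →ₗ[K] V)
    {k : ℕ} (u : Fin k → V) (t : Fin k → ℕ) (ht : Monotone t) (hu : IsGenTuple f u t)
    (r : Fin k → ℕ) (hr : ∀ i, r i ≤ t i) :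
    Hinv f (⨆ i, cyc f ((f ^ r i) (u i))) ↔
      Monotone r ∧ Monotone (fun i => t i - r i) := by
  rw [hu.hinv_iSup_cyc_pow_iff hr, forall_le_add_tsub_iff_monotone ht hr]

theorem stmt19 [FiniteDimensional K V] (f : V →ₗ[K] V) (hf : IsNilpotent f)
    {k : ℕ} (u : Fin k → V) (t : Fin k → ℕ) (ht : Monotone t) (hu : IsGenTuple f u t)
    (r : Fin k → ℕ) (hr : ∀ i, r i ≤ t i) :
    Hinv f (⨆ i, cyc f ((f ^ r i) (u i))) ↔
      Monotone r ∧ Monotone (fun i => t i - r i) :=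
  stmt19_general f u t ht hu r hr
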